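/- arXiv:2309.08352 — 7 statements merged into one kernel-verified Lean document; each statement's English description precedes it below -/
import Mathlib

section
/- (First-in-first-work structure of the envelope.) In the equally spaced piecewise linear setting with K ≥ 2, set m_k = t_k + βd/(β+γ) for k = 1,…,K−1. Then the set T̂_k = {t ∈ ℝ : c_k(t) = ĉ_K(t)} equals (−∞, m₁] for k = 1, equals [m_{k−1}, m_k] for 1 < k < K, and equals [m_{K−1}, +∞) for k = K. In particular the sets T̂₁,…,T̂_K cover ℝ, are intervals ordered increasingly in k, and consecutive ones intersect only at the single point m_k. -/
open MeasureTheory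

/-- Piecewise linear schedule delay cost with preferred arrival time `tk`. -/
noncomputable def sdc (β γ tk t : ℝ) : ℝ := if t < tk then β * (tk - t) else γ * (t - tk)

/-- The `k`-th preferred arrival time `t_k = t₁ + (k-1)d`. -/
noncomputable def tpref (t₁ d : ℝ) (k : ℕ) : ℝ := t₁ + ((k : ℝ) - 1) * d

/-- The envelope `ĉ_K(t) = min_{1 ≤ k ≤ K} c_k(t)`. -/
noncomputable def env (β γ t₁ d : ℝ) (K : ℕ) (t : ℝ) : ℝ :=
  sInf ((fun k : ℕ => sdc β γ (tpref t₁ d k) t) '' Set.Icc 1 K)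

/-- `T̂_k`: the set of times at which `c_k` attains the minimum among `c₁, …, c_K`. -/
noncomputable def Targmin (β γ t₁ d : ℝ) (K k : ℕ) : Set ℝ :=
  {t : ℝ | sdc β γ (tpref t₁ d k) t = env β γ t₁ d K t}

namespace Stmt2Aux

noncomputable def mk' (β γ t₁ d : ℝ) (k : ℕ) : ℝ := tpref t₁ d k + β * d / (β + γ)

lemma tpref_succ (t₁ d : ℝ) (k : ℕ) : tpref t₁ d (k+1) = tpref t₁ d k + d := by
  simp only [tpref]; push_cast; ring

variable {β γ t₁ d : ℝ}

lemma mk'_mono (hd : 0 < d) : Monotone (mk' β γ t₁ d) := by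
  intro i j h
  have hij : (i:ℝ) ≤ j := Nat.cast_le.mpr h
  simp only [mk', tpref]
  nlinarith

lemma cross_lt (hβ : 0 < β) (hγ : 0 < γ) (hd : 0 < d) (k : ℕ) (t : ℝ)
    (ht : t < mk' β γ t₁ d k) :
    sdc β γ (tpref t₁ d k) t < sdc β γ (tpref t₁ d (k+1)) t := by
  have hbg : 0 < β + γ := by linarith
  have hsd : β * d / (β + γ) < d := by rw [div_lt_iff₀ hbg]; nlinarith
  have hs0 : 0 < β * d / (β + γ) := by positivity
  rw [tpref_succ]
  simp only [mk'] at ht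
  unfold sdc
  by_cases h1 : t < tpref t₁ d k
  · rw [if_pos h1, if_pos (by linarith)]; nlinarith
  · push_neg at h1
    rw [if_neg (not_lt.mpr h1), if_pos (by linarith)]
    have h3 : (t - tpref t₁ d k) * (β + γ) < β * d := by
      rw [← lt_div_iff₀ hbg]; linarith
    nlinarith

lemma cross_gt (hβ : 0 < β) (hγ : 0 < γ) (hd : 0 < d) (k : ℕ) (t : ℝ)
    (ht : mk' β γ t₁ d k < t) :
    sdc β γ (tpref t₁ d (k+1)) t < sdc β γ (tpref t₁ d k) t := by
  have hbg : 0 < β + γ := by linarith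
  have hsd : β * d / (β + γ) < d := by rw [div_lt_iff₀ hbg]; nlinarith
  have hs0 : 0 < β * d / (β + γ) := by positivity
  rw [tpref_succ]
  simp only [mk'] at ht
  have h1 : ¬ t < tpref t₁ d k := by push_neg; linarith
  unfold sdc
  rw [if_neg h1]
  by_cases h2 : t < tpref t₁ d k + d
  · rw [if_pos h2]
    have h3 : β * d < (t - tpref t₁ d k) * (β + γ) := by
      rw [← div_lt_iff₀ hbg]; linarith
    nlinarith
  · push_neg at h2
    rw [if_neg (not_lt.mpr h2)]
    nlinarith

lemma cross_eq (hβ : 0 < β) (hγ : 0 < γ) (hd : 0 < d) (k : ℕ) :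
    sdc β γ (tpref t₁ d k) (mk' β γ t₁ d k)
      = sdc β γ (tpref t₁ d (k+1)) (mk' β γ t₁ d k) := by
  have hbg : 0 < β + γ := by linarith
  have hsd : β * d / (β + γ) < d := by rw [div_lt_iff₀ hbg]; nlinarith
  have hs0 : 0 < β * d / (β + γ) := by positivity
  rw [tpref_succ]
  rw [show mk' β γ t₁ d k = tpref t₁ d k + β * d / (β + γ) from rfl]; simp only [sdc]
  rw [if_neg (by push_neg; linarith), if_pos (by linarith)]
  field_simp
  ring

lemma step_le (hβ : 0 < β) (hγ : 0 < γ) (hd : 0 < d) (k : ℕ) (t : ℝ)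
    (ht : t ≤ mk' β γ t₁ d k) :
    sdc β γ (tpref t₁ d k) t ≤ sdc β γ (tpref t₁ d (k+1)) t := by
  rcases ht.lt_or_eq with h | h
  · exact (cross_lt hβ hγ hd k t h).le
  · subst h; exact (cross_eq hβ hγ hd k).le

lemma step_ge (hβ : 0 < β) (hγ : 0 < γ) (hd : 0 < d) (k : ℕ) (t : ℝ)
    (ht : mk' β γ t₁ d k ≤ t) :
    sdc β γ (tpref t₁ d (k+1)) t ≤ sdc β γ (tpref t₁ d k) t := by
  rcases ht.lt_or_eq with h | h
  · exact (cross_gt hβ hγ hd k t h).le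
  · subst h; exact (cross_eq hβ hγ hd k).ge

lemma chain_up (hβ : 0 < β) (hγ : 0 < γ) (hd : 0 < d) (j k : ℕ) (hjk : j ≤ k) (t : ℝ)
    (ht : t ≤ mk' β γ t₁ d j) :
    sdc β γ (tpref t₁ d j) t ≤ sdc β γ (tpref t₁ d k) t := by
  induction k, hjk using Nat.le_induction with
  | base => exact le_refl _
  | succ n hn ih =>
      exact ih.trans (step_le hβ hγ hd n t (ht.trans (mk'_mono hd hn)))

lemma chain_down (hβ : 0 < β) (hγ : 0 < γ) (hd : 0 < d) (j k : ℕ) (hjk : j ≤ k) (t : ℝ)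
    (ht : ∀ i, j ≤ i → i < k → mk' β γ t₁ d i ≤ t) :
    sdc β γ (tpref t₁ d k) t ≤ sdc β γ (tpref t₁ d j) t := by
  induction k, hjk using Nat.le_induction with
  | base => exact le_refl _
  | succ n hn ih =>
      exact (step_ge hβ hγ hd n t (ht n hn (Nat.lt_succ_self n))).trans
        (ih fun i hi hin => ht i hi (by omega))

lemma mem_Targmin_iff {K k : ℕ} (hk : k ∈ Set.Icc 1 K) (t : ℝ) :
    t ∈ Targmin β γ t₁ d K k ↔
      ∀ j ∈ Set.Icc 1 K, sdc β γ (tpref t₁ d k) t ≤ sdc β γ (tpref t₁ d j) t := by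
  have hfin : ((fun j : ℕ => sdc β γ (tpref t₁ d j) t) '' Set.Icc 1 K).Finite :=
    (Set.finite_Icc 1 K).image _
  have hne : ((fun j : ℕ => sdc β γ (tpref t₁ d j) t) '' Set.Icc 1 K).Nonempty :=
    ⟨_, ⟨k, hk, rfl⟩⟩
  simp only [Targmin, Set.mem_setOf_eq, env]
  constructor
  · intro h j hj
    have h1 : sInf ((fun j : ℕ => sdc β γ (tpref t₁ d j) t) '' Set.Icc 1 K)
        ≤ sdc β γ (tpref t₁ d j) t := csInf_le hfin.bddBelow ⟨j, hj, rfl⟩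
    exact le_trans (le_of_eq h) h1
  · intro h
    have h1 : sInf ((fun j : ℕ => sdc β γ (tpref t₁ d j) t) '' Set.Icc 1 K)
        ≤ sdc β γ (tpref t₁ d k) t := csInf_le hfin.bddBelow ⟨k, hk, rfl⟩
    obtain ⟨j, hj, hy⟩ := hne.csInf_mem hfin
    exact le_antisymm ((h j hj).trans hy.le) h1

end Stmt2Aux

open Stmt2Aux

/-- First-in-first-work structure of the envelope: with `m_k = t_k + βd/(β+γ)`,
`T̂₁ = (-∞, m₁]`, `T̂_k = [m_{k-1}, m_k]` for `1 < k < K`, `T̂_K = [m_{K-1}, ∞)`;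
the sets `T̂₁, …, T̂_K` cover `ℝ` and consecutive ones meet only at the point `m_k`. -/
theorem stmt2 (β γ : ℝ) (hβ : 0 < β) (hγ : 0 < γ) (δ : ℝ) (hδ : δ = β * γ / (β + γ))
    (K : ℕ) (hK : 2 ≤ K) (d : ℝ) (hd : 0 < d) (t₁ : ℝ)
    (m : ℕ → ℝ) (hm : ∀ k, m k = tpref t₁ d k + β * d / (β + γ)) :
    Targmin β γ t₁ d K 1 = Set.Iic (m 1) ∧
    (∀ k : ℕ, 1 < k → k < K → Targmin β γ t₁ d K k = Set.Icc (m (k - 1)) (m k)) ∧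
    Targmin β γ t₁ d K K = Set.Ici (m (K - 1)) ∧
    (⋃ k ∈ Finset.Icc 1 K, Targmin β γ t₁ d K k) = Set.univ ∧
    (∀ k : ℕ, 1 ≤ k → k + 1 ≤ K →
      Targmin β γ t₁ d K k ∩ Targmin β γ t₁ d K (k + 1) = {m k}) := by
  have hm' : ∀ k, m k = mk' β γ t₁ d k := fun k => by rw [hm]; rfl
  -- membership lemmas
  have memT : ∀ (k : ℕ), 1 ≤ k → k ≤ K → ∀ t : ℝ,
      (t ∈ Targmin β γ t₁ d K k ↔
        ∀ j ∈ Set.Icc 1 K, sdc β γ (tpref t₁ d k) t ≤ sdc β γ (tpref t₁ d j) t) :=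
    fun k hk1 hk2 t => mem_Targmin_iff ⟨hk1, hk2⟩ t
  -- T̂_k contains [m_{k-1}, m_k] style memberships: general sufficient condition
  have mem_of : ∀ (k : ℕ), 1 ≤ k → k ≤ K → ∀ t : ℝ,
      (∀ i, 1 ≤ i → i < k → mk' β γ t₁ d i ≤ t) → t ≤ mk' β γ t₁ d k →
      t ∈ Targmin β γ t₁ d K k := by
    intro k hk1 hk2 t hlo hhi
    rw [memT k hk1 hk2 t]
    intro j hj
    rcases le_or_gt j k with hjk | hjk
    · exact chain_down hβ hγ hd j k hjk t (fun i hi hik => hlo i (le_trans hj.1 hi) hik)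
    · exact chain_up hβ hγ hd k j hjk.le t hhi
  -- similar, for k = K (no upper bound needed)
  have mem_of_top : ∀ t : ℝ, (∀ i, 1 ≤ i → i < K → mk' β γ t₁ d i ≤ t) →
      t ∈ Targmin β γ t₁ d K K := by
    intro t hlo
    rw [memT K (by omega) le_rfl t]
    intro j hj
    exact chain_down hβ hγ hd j K hj.2 t (fun i hi hik => hlo i (le_trans hj.1 hi) hik)
  -- necessary conditions
  have nec_hi : ∀ (k : ℕ), 1 ≤ k → k + 1 ≤ K → ∀ t : ℝ,
      t ∈ Targmin β γ t₁ d K k → t ≤ mk' β γ t₁ d k := by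
    intro k hk1 hk2 t ht
    by_contra hc
    push_neg at hc
    have h1 := (memT k hk1 (by omega) t).mp ht (k+1) ⟨by omega, hk2⟩
    have h2 := cross_gt (t₁ := t₁) hβ hγ hd k t hc
    linarith
  have nec_lo : ∀ (k : ℕ), 2 ≤ k → k ≤ K → ∀ t : ℝ,
      t ∈ Targmin β γ t₁ d K k → mk' β γ t₁ d (k-1) ≤ t := by
    intro k hk1 hk2 t ht
    by_contra hc
    push_neg at hc
    have hkk : (k - 1) + 1 = k := by omega
    have h1 := (memT k (by omega) hk2 t).mp ht (k-1) ⟨by omega, by omega⟩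
    have h2 := cross_lt (t₁ := t₁) hβ hγ hd (k-1) t hc
    rw [hkk] at h2
    linarith
  have part1 : Targmin β γ t₁ d K 1 = Set.Iic (m 1) := by
    ext t
    simp only [Set.mem_Iic, hm']
    constructor
    · exact fun h => nec_hi 1 le_rfl hK t h
    · exact fun h => mem_of 1 le_rfl (by omega) t (fun i hi1 hi2 => by omega) h
  have part2 : ∀ k : ℕ, 1 < k → k < K →
      Targmin β γ t₁ d K k = Set.Icc (m (k - 1)) (m k) := by
    intro k hk1 hk2
    ext t
    simp only [Set.mem_Icc, hm']
    constructor
    · exact fun h => ⟨nec_lo k hk1 hk2.le t h, nec_hi k (by omega) (by omega) t h⟩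
    · rintro ⟨h1, h2⟩
      refine mem_of k (by omega) hk2.le t (fun i hi1 hi2 => ?_) h2
      exact le_trans (mk'_mono hd (by omega : i ≤ k - 1)) h1
  have part3 : Targmin β γ t₁ d K K = Set.Ici (m (K - 1)) := by
    ext t
    simp only [Set.mem_Ici, hm']
    constructor
    · exact fun h => nec_lo K hK le_rfl t h
    · intro h
      refine mem_of_top t (fun i hi1 hi2 => ?_)
      exact le_trans (mk'_mono hd (by omega : i ≤ K - 1)) h
  have part4 : (⋃ k ∈ Finset.Icc 1 K, Targmin β γ t₁ d K k) = Set.univ := by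
    ext t
    simp only [Set.mem_iUnion, Set.mem_univ, iff_true, Finset.mem_Icc]
    classical
    rcases le_or_gt t (mk' β γ t₁ d 1) with h1 | h1
    · exact ⟨1, ⟨le_rfl, by omega⟩, by rw [part1]; simpa [hm'] using h1⟩
    rcases le_or_gt (mk' β γ t₁ d (K-1)) t with h2 | h2
    · exact ⟨K, ⟨by omega, le_rfl⟩, by rw [part3]; simpa [hm'] using h2⟩
    have hex : ∃ k, t ≤ mk' β γ t₁ d k := ⟨K - 1, h2.le⟩
    set k := Nat.find hex with hkdef
    have hk1 : t ≤ mk' β γ t₁ d k := Nat.find_spec hex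
    have hkK : k ≤ K - 1 := Nat.find_min' hex h2.le
    have hk2 : 2 ≤ k := by
      by_contra hc
      push_neg at hc
      have := le_trans hk1 (mk'_mono hd (by omega : k ≤ 1))
      linarith
    have hkp : mk' β γ t₁ d (k-1) < t := by
      have := Nat.find_min hex (show k - 1 < k by omega)
      push_neg at this
      exact this
    refine ⟨k, ⟨by omega, by omega⟩, ?_⟩
    rw [part2 k (by omega) (by omega)]
    simp only [Set.mem_Icc, hm']
    exact ⟨hkp.le, hk1⟩
  refine ⟨part1, part2, part3, part4, ?_⟩
  intro k hk1 hk2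
  ext t
  simp only [Set.mem_inter_iff, Set.mem_singleton_iff]
  constructor
  · rintro ⟨ha, hb⟩
    have h1 : t ≤ mk' β γ t₁ d k := nec_hi k hk1 hk2 t ha
    have h2 : mk' β γ t₁ d ((k+1)-1) ≤ t := nec_lo (k+1) (by omega) hk2 t hb
    simp only [Nat.add_sub_cancel] at h2
    rw [hm']
    linarith
  · intro h
    subst h
    rw [hm']
    constructor
    · exact mem_of k hk1 (by omega) (mk' β γ t₁ d k)
        (fun i hi1 hi2 => mk'_mono hd (by omega : i ≤ k)) le_rfl
    · exact mem_of (k+1) (by omega) hk2 (mk' β γ t₁ d k)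
        (fun i hi1 hi2 => mk'_mono hd (by omega : i ≤ k)) (mk'_mono hd (by omega : k ≤ k+1))
end

section
/- In the equally spaced piecewise linear setting, the Lebesgue measure of the sublevel set Γ_K(c) = {t ∈ ℝ : ĉ_K(t) ≤ c} equals K·c/δ when 0 ≤ c ≤ dδ, and equals (K−1)d + c/δ when c ≥ dδ. -/
open MeasureTheory

/-- The sublevel set `Γ_K(c) = {t : ĉ_K(t) ≤ c}`. -/
noncomputable def Gam (β γ t₁ d : ℝ) (K : ℕ) (c : ℝ) : Set ℝ :=
  {t : ℝ | env β γ t₁ d K t ≤ c}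

lemma sdc_le_iff {β γ : ℝ} (hβ : 0 < β) (hγ : 0 < γ) {c : ℝ} (hc : 0 ≤ c) (tk t : ℝ) :
    sdc β γ tk t ≤ c ↔ t ∈ Set.Icc (tk - c/β) (tk + c/γ) := by
  have hb : 0 ≤ c/β := div_nonneg hc hβ.le
  have hg : 0 ≤ c/γ := div_nonneg hc hγ.le
  rw [Set.mem_Icc]
  unfold sdc
  split_ifs with h
  · constructor
    · intro hle
      have : tk - t ≤ c / β := (le_div_iff₀ hβ).mpr (by linarith)
      constructor <;> linarith
    · intro ⟨h1, h2⟩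
      have : tk - t ≤ c / β := by linarith
      have := (le_div_iff₀ hβ).mp this
      linarith
  · push_neg at h
    constructor
    · intro hle
      have : t - tk ≤ c / γ := (le_div_iff₀ hγ).mpr (by linarith)
      constructor <;> linarith
    · intro ⟨h1, h2⟩
      have : t - tk ≤ c / γ := by linarith
      have := (le_div_iff₀ hγ).mp this
      linarith

lemma Gam_eq {β γ : ℝ} (hβ : 0 < β) (hγ : 0 < γ) (t₁ d : ℝ) {K : ℕ} (hK : 1 ≤ K)
    {c : ℝ} (hc : 0 ≤ c) :
    Gam β γ t₁ d K c =
      ⋃ k ∈ Finset.Icc 1 K, Set.Icc (tpref t₁ d k - c/β) (tpref t₁ d k + c/γ) := by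
  ext t
  have hne : ((fun k : ℕ => sdc β γ (tpref t₁ d k) t) '' Set.Icc 1 K).Nonempty :=
    ⟨_, Set.mem_image_of_mem _ (Set.mem_Icc.mpr ⟨le_refl 1, hK⟩)⟩
  have hfin : ((fun k : ℕ => sdc β γ (tpref t₁ d k) t) '' Set.Icc 1 K).Finite :=
    (Set.finite_Icc 1 K).image _
  simp only [Gam, env, Set.mem_setOf_eq, Set.mem_iUnion, Finset.mem_Icc]
  constructor
  · intro hle
    obtain ⟨k, hk, hk2⟩ := hne.csInf_mem hfin
    exact ⟨k, Set.mem_Icc.mp hk, (sdc_le_iff hβ hγ hc _ t).mp (hk2.le.trans hle)⟩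
  · rintro ⟨k, hk, hmem⟩
    calc sInf _ ≤ sdc β γ (tpref t₁ d k) t :=
          csInf_le hfin.bddBelow (Set.mem_image_of_mem _ (Set.mem_Icc.mpr hk))
      _ ≤ c := (sdc_le_iff hβ hγ hc _ t).mpr hmem

lemma tpref_succ (t₁ d : ℝ) (K : ℕ) : tpref t₁ d (K + 1) = tpref t₁ d K + d := by
  simp only [tpref]; push_cast; ring

lemma union_Icc_cover (t₁ d a b : ℝ) (ha : 0 ≤ a) (hb : 0 ≤ b) (hd : 0 < d)
    (hcov : d ≤ a + b) :
    ∀ K : ℕ, 1 ≤ K →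
      (⋃ k ∈ Finset.Icc 1 K, Set.Icc (tpref t₁ d k - a) (tpref t₁ d k + b))
        = Set.Icc (t₁ - a) (tpref t₁ d K + b) := by
  intro K
  induction K with
  | zero => omega
  | succ K ih =>
    intro _
    rcases Nat.eq_or_lt_of_le (Nat.one_le_iff_ne_zero.mpr (Nat.succ_ne_zero K)) with h | h
    · have hK0 : K = 0 := by omega
      subst hK0
      simp [tpref]
    · have hK : 1 ≤ K := by omega
      rw [← Finset.insert_Icc_right_eq_Icc_add_one (by omega : 1 ≤ K + 1), Finset.set_biUnion_insert, ih hK]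
      have h1 : tpref t₁ d K + d = tpref t₁ d (K + 1) := (tpref_succ t₁ d K).symm
      have h2 : t₁ ≤ tpref t₁ d K := by
        simp only [tpref]
        have : (0:ℝ) ≤ ((K:ℝ) - 1) * d := by
          apply mul_nonneg _ hd.le
          have : (1:ℝ) ≤ (K:ℝ) := by exact_mod_cast hK
          linarith
        linarith
      have h3 : tpref t₁ d (K + 1) = t₁ + (K : ℝ) * d := by
        simp only [tpref]; push_cast; ring
      have h4 : tpref t₁ d K = t₁ + ((K : ℝ) - 1) * d := rfl
      have hKd : 0 ≤ (K : ℝ) * d := mul_nonneg (Nat.cast_nonneg K) hd.le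
      have h5 : (K : ℝ) * d = ((K : ℝ) - 1) * d + d := by ring
      rw [Set.Icc_union_Icc' (by rw [h3]; linarith) (by rw [h3, h4]; linarith)]
      rw [min_eq_right (by rw [h3]; linarith), max_eq_left (by rw [h3, h4]; linarith)]

/-- Lebesgue measure of the sublevel set `Γ_K(c)`: it equals `K·c/δ` when
`0 ≤ c ≤ dδ` and `(K-1)d + c/δ` when `c ≥ dδ`. -/
theorem stmt3 (β γ : ℝ) (hβ : 0 < β) (hγ : 0 < γ) (δ : ℝ) (hδ : δ = β * γ / (β + γ))
    (K : ℕ) (hK : 1 ≤ K) (d : ℝ) (hd : 0 < d) (t₁ : ℝ)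
    (c : ℝ) (hc : 0 ≤ c) :
    (c ≤ d * δ →
      volume (Gam β γ t₁ d K c) = ENNReal.ofReal ((K : ℝ) * c / δ)) ∧
    (d * δ ≤ c →
      volume (Gam β γ t₁ d K c) = ENNReal.ofReal (((K : ℝ) - 1) * d + c / δ)) := by
  have hβγ : 0 < β + γ := by linarith
  have hδ0 : 0 < δ := by rw [hδ]; positivity
  have hsum : c / β + c / γ = c / δ := by
    rw [hδ]; field_simp; ring
  have ha : 0 ≤ c / β := div_nonneg hc hβ.le
  have hb : 0 ≤ c / γ := div_nonneg hc hγ.le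
  constructor
  · intro hcle
    have hlen : c / δ ≤ d := (div_le_iff₀ hδ0).mpr (by linarith)
    rw [Gam_eq hβ hγ t₁ d hK hc]
    have hioc : volume (⋃ k ∈ Finset.Icc 1 K,
          Set.Icc (tpref t₁ d k - c/β) (tpref t₁ d k + c/γ))
        = volume (⋃ k ∈ Finset.Icc 1 K,
          Set.Ioc (tpref t₁ d k - c/β) (tpref t₁ d k + c/γ)) := by
      apply le_antisymm
      · have hnull : volume (⋃ k ∈ Finset.Icc 1 K, ({tpref t₁ d k - c/β} : Set ℝ)) = 0 := by
          refine (measure_biUnion_null_iff (Finset.Icc 1 K).countable_toSet).mpr ?_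
          intro k _; exact measure_singleton _
        calc volume (⋃ k ∈ Finset.Icc 1 K,
              Set.Icc (tpref t₁ d k - c/β) (tpref t₁ d k + c/γ))
            ≤ volume ((⋃ k ∈ Finset.Icc 1 K,
                Set.Ioc (tpref t₁ d k - c/β) (tpref t₁ d k + c/γ)) ∪
              (⋃ k ∈ Finset.Icc 1 K, ({tpref t₁ d k - c/β} : Set ℝ))) := by
              apply measure_mono
              refine Set.iUnion₂_subset fun k hk => ?_
              intro t ht
              rcases eq_or_lt_of_le ht.1 with he | hlt
              · exact Or.inr (Set.mem_biUnion hk (by simp [← he]))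
              · exact Or.inl (Set.mem_biUnion hk ⟨hlt, ht.2⟩)
          _ ≤ volume (⋃ k ∈ Finset.Icc 1 K,
                Set.Ioc (tpref t₁ d k - c/β) (tpref t₁ d k + c/γ)) + 0 := by
              rw [← hnull]; exact measure_union_le _ _
          _ = _ := by rw [add_zero]
      · exact measure_mono (Set.iUnion₂_mono fun k _ => Set.Ioc_subset_Icc_self)
    rw [hioc]
    have key : ∀ i j : ℕ, i < j →
        tpref t₁ d i + c/γ ≤ tpref t₁ d j - c/β := by
      intro i j hij
      have hji : (1 : ℝ) ≤ (j : ℝ) - (i : ℝ) := by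
        have : (i : ℝ) + 1 ≤ (j : ℝ) := by exact_mod_cast hij
        linarith
      have : d ≤ ((j : ℝ) - (i : ℝ)) * d := by nlinarith
      simp only [tpref]
      have hsum' : c / β + c / γ ≤ d := by rw [hsum]; exact hlen
      nlinarith
    have hdisj : (↑(Finset.Icc 1 K) : Set ℕ).PairwiseDisjoint
        (fun k => Set.Ioc (tpref t₁ d k - c/β) (tpref t₁ d k + c/γ)) := by
      intro i _ j _ hij
      rcases lt_or_gt_of_ne hij with h | h
      · exact Set.Ioc_disjoint_Ioc.mpr
          (le_trans (min_le_left _ _) (le_trans (key i j h) (le_max_right _ _)))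
      · exact Set.Ioc_disjoint_Ioc.mpr
          (le_trans (min_le_right _ _) (le_trans (key j i h) (le_max_left _ _)))
    rw [measure_biUnion_finset hdisj (fun k _ => measurableSet_Ioc)]
    have hterm : ∀ k ∈ Finset.Icc 1 K,
        volume (Set.Ioc (tpref t₁ d k - c/β) (tpref t₁ d k + c/γ))
          = ENNReal.ofReal (c / δ) := by
      intro k _
      rw [Real.volume_Ioc]
      congr 1
      rw [← hsum]; ring
    rw [Finset.sum_congr rfl hterm, Finset.sum_const, Nat.card_Icc]
    simp only [Nat.add_sub_cancel, nsmul_eq_mul]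
    rw [← ENNReal.ofReal_natCast K, ← ENNReal.ofReal_mul (by positivity), mul_div_assoc]
  · intro hge
    have hcov : d ≤ c / β + c / γ := by
      rw [hsum, le_div_iff₀ hδ0]; linarith
    rw [Gam_eq hβ hγ t₁ d hK hc, union_Icc_cover t₁ d _ _ ha hb hd hcov K hK,
      Real.volume_Icc]
    congr 1
    rw [← hsum]; simp only [tpref]; ring
end

section
/- (Analytic core of Lemma 6: staggered work hours strictly reduce the equilibrium commuting cost.) In the equally spaced piecewise linear setting, for every μ > 0 and every demand X ≥ 2μd, one has c̄₁(X, μ) − c̄₂(X, μ) = dδ > 0, where c̄₁ is computed with the single preferred time t₁ and c̄₂ with the two preferred times t₁ and t₂ = t₁ + d. -/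
open MeasureTheory

/-- `IsCbar β γ t₁ d K X μ c` says that `c` is (a, hence the unique) value `c̄_K(X, μ)`:
`c ≥ 0` and `μ · Leb(Γ_K(c)) = X`. -/
noncomputable def IsCbar (β γ t₁ d : ℝ) (K : ℕ) (X μ c : ℝ) : Prop :=
  0 ≤ c ∧ μ * (volume (Gam β γ t₁ d K c)).toReal = X

lemma sdc_level (β γ tk c : ℝ) (hβ : 0 < β) (hγ : 0 < γ) (hc : 0 ≤ c) :
    {t : ℝ | sdc β γ tk t ≤ c} = Set.Icc (tk - c/β) (tk + c/γ) := by
  ext t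
  simp only [Set.mem_setOf_eq, Set.mem_Icc, sdc]
  have hb := div_nonneg hc hβ.le
  have hg := div_nonneg hc hγ.le
  have h1 : c/β * β = c := div_mul_cancel₀ c hβ.ne'
  have h2 : c/γ * γ = c := div_mul_cancel₀ c hγ.ne'
  split_ifs with h
  · constructor
    · intro h'; exact ⟨by nlinarith, by nlinarith⟩
    · rintro ⟨ha, hb'⟩; nlinarith
  · push_neg at h
    constructor
    · intro h'; exact ⟨by nlinarith, by nlinarith⟩
    · rintro ⟨ha, hb'⟩; nlinarith

lemma Gam_one (β γ t₁ d c : ℝ) (hβ : 0 < β) (hγ : 0 < γ) (hc : 0 ≤ c) :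
    Gam β γ t₁ d 1 c = Set.Icc (t₁ - c/β) (t₁ + c/γ) := by
  have hI : Set.Icc (1:ℕ) 1 = {1} := Set.Icc_self 1
  have htp : tpref t₁ d 1 = t₁ := by simp [tpref]
  have : Gam β γ t₁ d 1 c = {t : ℝ | sdc β γ t₁ t ≤ c} := by
    ext t; simp [Gam, env, hI, htp]
  rw [this, sdc_level β γ t₁ c hβ hγ hc]

lemma Gam_two (β γ t₁ d c : ℝ) (hβ : 0 < β) (hγ : 0 < γ) (hc : 0 ≤ c) :
    Gam β γ t₁ d 2 c =
      Set.Icc (t₁ - c/β) (t₁ + c/γ) ∪ Set.Icc (t₁ + d - c/β) (t₁ + d + c/γ) := by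
  have hI : Set.Icc (1:ℕ) 2 = {1, 2} := by ext x; simp [Set.mem_Icc]; omega
  have h1 : tpref t₁ d 1 = t₁ := by simp [tpref]
  have h2 : tpref t₁ d 2 = t₁ + d := by norm_num [tpref]
  have : Gam β γ t₁ d 2 c = {t : ℝ | sdc β γ t₁ t ≤ c} ∪ {t : ℝ | sdc β γ (t₁+d) t ≤ c} := by
    ext t
    simp only [Gam, env, hI, Set.image_insert_eq, Set.image_singleton, h1, h2,
      csInf_pair, inf_le_iff, Set.mem_setOf_eq, Set.mem_union]
  rw [this, sdc_level β γ t₁ c hβ hγ hc, sdc_level β γ (t₁+d) c hβ hγ hc]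

/-- Staggered work hours strictly reduce the equilibrium commuting cost: for demand
`X ≥ 2μd`, `c̄₁(X, μ) - c̄₂(X, μ) = dδ > 0`, where `c̄₁` uses the single preferred
time `t₁` and `c̄₂` the two preferred times `t₁` and `t₂ = t₁ + d`. -/
theorem stmt6 (β γ : ℝ) (hβ : 0 < β) (hγ : 0 < γ) (δ : ℝ) (hδ : δ = β * γ / (β + γ))
    (d : ℝ) (hd : 0 < d) (t₁ : ℝ)
    (μ : ℝ) (hμ : 0 < μ) (X : ℝ) (hX : 2 * μ * d ≤ X)
    (c₁ c₂ : ℝ) (hc₁ : IsCbar β γ t₁ d 1 X μ c₁) (hc₂ : IsCbar β γ t₁ d 2 X μ c₂) :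
    c₁ - c₂ = d * δ ∧ 0 < d * δ := by
  obtain ⟨hc₁0, hc₁X⟩ := hc₁
  obtain ⟨hc₂0, hc₂X⟩ := hc₂
  have hβγ : 0 < β + γ := by linarith
  have hδ0 : 0 < δ := by rw [hδ]; positivity
  have hb1 : 0 ≤ c₁/β := div_nonneg hc₁0 hβ.le
  have hg1 : 0 ≤ c₁/γ := div_nonneg hc₁0 hγ.le
  have hb2 : 0 ≤ c₂/β := div_nonneg hc₂0 hβ.le
  have hg2 : 0 ≤ c₂/γ := div_nonneg hc₂0 hγ.le
  -- equation for c₁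
  rw [Gam_one β γ t₁ d c₁ hβ hγ hc₁0, Real.volume_Icc] at hc₁X
  rw [ENNReal.toReal_ofReal (by linarith : (0:ℝ) ≤ t₁ + c₁/γ - (t₁ - c₁/β))] at hc₁X
  have e1 : μ * (c₁/β + c₁/γ) = X := by linarith [hc₁X]
  -- Gam 2
  rw [Gam_two β γ t₁ d c₂ hβ hγ hc₂0] at hc₂X
  -- exclude the non-overlap case
  have hov : d ≤ c₂/β + c₂/γ := by
    by_contra hlt
    push_neg at hlt
    have hle : (volume (Set.Icc (t₁ - c₂/β) (t₁ + c₂/γ) ∪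
        Set.Icc (t₁ + d - c₂/β) (t₁ + d + c₂/γ))).toReal ≤ 2 * (c₂/β + c₂/γ) := by
      have h1 := measure_union_le (μ := volume)
        (Set.Icc (t₁ - c₂/β) (t₁ + c₂/γ)) (Set.Icc (t₁ + d - c₂/β) (t₁ + d + c₂/γ))
      rw [Real.volume_Icc, Real.volume_Icc] at h1
      have h2 := ENNReal.toReal_mono (by finiteness) h1
      rw [ENNReal.toReal_add (by finiteness) (by finiteness),
        ENNReal.toReal_ofReal (by linarith : (0:ℝ) ≤ t₁ + c₂/γ - (t₁ - c₂/β)),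
        ENNReal.toReal_ofReal (by linarith : (0:ℝ) ≤ t₁ + d + c₂/γ - (t₁ + d - c₂/β))] at h2
      linarith
    have hlt2 : μ * (volume (Set.Icc (t₁ - c₂/β) (t₁ + c₂/γ) ∪
        Set.Icc (t₁ + d - c₂/β) (t₁ + d + c₂/γ))).toReal < X :=
      calc μ * _ ≤ μ * (2 * (c₂/β + c₂/γ)) := mul_le_mul_of_nonneg_left hle hμ.le
        _ < μ * (2 * d) := mul_lt_mul_of_pos_left (by linarith) hμ
        _ ≤ X := by linarith
    linarith [hc₂X, hlt2]
  -- overlap: union is an interval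
  have hu : Set.Icc (t₁ - c₂/β) (t₁ + c₂/γ) ∪ Set.Icc (t₁ + d - c₂/β) (t₁ + d + c₂/γ)
      = Set.Icc (t₁ - c₂/β) (t₁ + d + c₂/γ) := by
    rw [Set.Icc_union_Icc' (by linarith) (by linarith)]
    rw [min_eq_left (by linarith), max_eq_right (by linarith)]
  rw [hu, Real.volume_Icc,
    ENNReal.toReal_ofReal (by linarith : (0:ℝ) ≤ t₁ + d + c₂/γ - (t₁ - c₂/β))] at hc₂X
  have e2 : μ * (d + c₂/β + c₂/γ) = X := by linarith [hc₂X]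
  have key : c₁ - c₂ = d * δ := by
    have h4 : (c₁ - c₂) * (β + γ) = d * (β * γ) := by
      have h3 : μ * ((c₁ - c₂) * (β + γ)) = μ * (d * (β * γ)) := by
        field_simp at e1 e2
        linear_combination e1 - e2
      exact mul_left_cancel₀ hμ.ne' h3
    rw [hδ]
    field_simp
    linarith [h4]
  exact ⟨key, by positivity⟩
end

section
/- Let f : ℝ → ℝ be convex, with minimum value 0 attained at some point, and coercive, and let m(c) = Leb({t : f(t) ≤ c}). For μ > 0, define c̄(X, μ) for X ≥ μ·m(0) as the unique c ≥ 0 with μ·m(c) = X. Then the map X ↦ c̄(X, μ) is convex on [μ·m(0), ∞). -/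
open MeasureTheory Filter Set

private lemma combo_mem_Icc {a1 b1 a2 b2 p q t : ℝ} (hp : 0 ≤ p) (hq : 0 ≤ q)
    (hpq : p + q = 1) (h1 : a1 ≤ b1) (h2 : a2 ≤ b2)
    (ht : t ∈ Set.Icc (p*a1+q*a2) (p*b1+q*b2)) :
    ∃ t1 ∈ Set.Icc a1 b1, ∃ t2 ∈ Set.Icc a2 b2, t = p*t1 + q*t2 := by
  obtain ⟨hlo, hhi⟩ := ht
  have hlh : p*a1+q*a2 ≤ p*b1+q*b2 := le_trans hlo hhi
  rcases eq_or_lt_of_le hlh with heq | hlt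
  · exact ⟨a1, ⟨le_refl _, h1⟩, a2, ⟨le_refl _, h2⟩, le_antisymm (by linarith) hlo⟩
  · set lam := (t - (p*a1+q*a2))/((p*b1+q*b2) - (p*a1+q*a2)) with hlam
    have hd : (0:ℝ) < (p*b1+q*b2) - (p*a1+q*a2) := by linarith
    have h0 : 0 ≤ lam := div_nonneg (by linarith) hd.le
    have h1' : lam ≤ 1 := by rw [hlam, div_le_one hd]; linarith
    have key : lam * ((p*b1+q*b2) - (p*a1+q*a2)) = t - (p*a1+q*a2) := by
      rw [hlam, div_mul_cancel₀]
      exact ne_of_gt hd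
    refine ⟨a1 + lam*(b1-a1), ⟨by nlinarith, by nlinarith⟩,
      a2 + lam*(b2-a2), ⟨by nlinarith, by nlinarith⟩, by linarith [key]⟩

/-- Convexity of the equilibrium commuting cost `X ↦ c̄(X, μ)` for a general convex,
coercive schedule delay cost `f` with minimum value `0`: if `cbar X` is, for each
`X ≥ μ·m(0)`, the unique `c ≥ 0` with `μ·m(c) = X` (where `m(c) = Leb({t : f t ≤ c})`),
then `cbar` is convex on `[μ·m(0), ∞)`. -/
theorem stmt9 (f : ℝ → ℝ) (hconv : ConvexOn ℝ Set.univ f)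
    (hmin : ∃ t₀ : ℝ, f t₀ = 0) (hnn : ∀ t, 0 ≤ f t)
    (hcoer : Tendsto f (cocompact ℝ) atTop)
    (m : ℝ → ℝ) (hm : ∀ c, m c = (volume {t : ℝ | f t ≤ c}).toReal)
    (μ : ℝ) (hμ : 0 < μ)
    (cbar : ℝ → ℝ)
    (hcbar : ∀ X : ℝ, μ * m 0 ≤ X → 0 ≤ cbar X ∧ μ * m (cbar X) = X) :
    ConvexOn ℝ (Set.Ici (μ * m 0)) cbar := by
  obtain ⟨t₀, ht₀⟩ := hmin
  have hcont : Continuous f := by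
    have := hconv.continuousOn isOpen_univ
    exact continuousOn_univ.mp this
  -- Structure of sublevel sets: compact intervals
  have hS : ∀ c : ℝ, 0 ≤ c → ∃ a b : ℝ, a ≤ b ∧ {t : ℝ | f t ≤ c} = Icc a b ∧ m c = b - a := by
    intro c hc
    set S := {t : ℝ | f t ≤ c} with hSdef
    have hne : S.Nonempty := ⟨t₀, by simp [hSdef, ht₀, hc]⟩
    have hclosed : IsClosed S := isClosed_le hcont continuous_const
    have hcpt : IsCompact S := by
      have h1 : ∀ᶠ x in cocompact ℝ, c + 1 ≤ f x := hcoer.eventually (eventually_ge_atTop (c+1))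
      obtain ⟨K, hK, hKsub⟩ := mem_cocompact.mp h1
      have hsub : S ⊆ K := by
        intro x hx
        by_contra h
        have h2 := hKsub h
        have h3 : f x ≤ c := hx
        simp only [mem_setOf_eq] at h2
        linarith
      exact hK.of_isClosed_subset hclosed hsub
    have hconvS : Convex ℝ S := by
      have := hconv.convex_le c
      simpa using this
    have hInf : sInf S ∈ S := hcpt.sInf_mem hne
    have hSup : sSup S ∈ S := hcpt.sSup_mem hne
    have hab : sInf S ≤ sSup S := csInf_le_csSup hne hcpt.bddBelow hcpt.bddAbove
    have hIcc : S = Icc (sInf S) (sSup S) := by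
      apply Subset.antisymm
      · intro x hx
        exact ⟨csInf_le hcpt.bddBelow hx, le_csSup hcpt.bddAbove hx⟩
      · exact hconvS.ordConnected.out hInf hSup
    refine ⟨sInf S, sSup S, hab, hIcc, ?_⟩
    rw [hm c, show {t : ℝ | f t ≤ c} = Icc (sInf S) (sSup S) from hIcc,
      Real.volume_Icc, ENNReal.toReal_ofReal (by linarith)]
  -- Strict monotonicity of m on [0, ∞)
  have hmono : ∀ c c' : ℝ, 0 ≤ c → c < c' → m c < m c' := by
    intro c c' hc hcc
    obtain ⟨a, b, hab, hSc, hmc⟩ := hS c hc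
    obtain ⟨a', b', hab', hSc', hmc'⟩ := hS c' (le_trans hc hcc.le)
    have hfb : f b ≤ c := by
      have hb : b ∈ Icc a b := ⟨hab, le_refl b⟩
      rw [← hSc] at hb; exact hb
    have hfa : f a ≤ c := by
      have ha : a ∈ Icc a b := ⟨le_refl a, hab⟩
      rw [← hSc] at ha; exact ha
    obtain ⟨K, hK, hKsub⟩ := mem_cocompact.mp
      (hcoer.eventually (eventually_ge_atTop c'))
    obtain ⟨R, hR⟩ := hK.bddAbove
    set T := max b R + 1 with hT
    have hbT : b ≤ T := le_trans (le_max_left b R) (by linarith)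
    have hfT : c' ≤ f T := by
      apply hKsub
      intro hTK
      have hTR := hR hTK
      have : R < T := lt_of_le_of_lt (le_max_right b R) (by linarith)
      exact absurd hTR (not_le_of_gt this)
    have hmid : f b ≤ (c+c')/2 := by linarith
    have hmid' : (c+c')/2 ≤ f T := by linarith
    obtain ⟨t', ht'mem, ht'⟩ := intermediate_value_Icc hbT hcont.continuousOn ⟨hmid, hmid'⟩
    have ht'c' : t' ∈ Icc a' b' := by
      rw [← hSc']
      show f t' ≤ c'
      rw [ht']; linarith
    have hbt' : b < t' := by
      rcases lt_or_eq_of_le ht'mem.1 with h | h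
      · exact h
      · exfalso; rw [← h] at ht'; linarith
    have haa' : a' ≤ a := by
      have ha : a ∈ Icc a' b' := by
        rw [← hSc']
        show f a ≤ c'
        linarith
      exact ha.1
    rw [hmc, hmc']
    have := ht'c'.2
    linarith
  -- Concavity of m on [0, ∞)
  have hconc : ∀ c1 c2 p q : ℝ, 0 ≤ c1 → 0 ≤ c2 → 0 ≤ p → 0 ≤ q → p + q = 1 →
      p * m c1 + q * m c2 ≤ m (p*c1 + q*c2) := by
    intro c1 c2 p q hc1 hc2 hp hq hpq
    obtain ⟨a1, b1, h1, hS1, hm1⟩ := hS c1 hc1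
    obtain ⟨a2, b2, h2, hS2, hm2⟩ := hS c2 hc2
    have hc : 0 ≤ p*c1 + q*c2 := by positivity
    obtain ⟨A, B, hAB, hSA, hmA⟩ := hS _ hc
    have hsub : Icc (p*a1+q*a2) (p*b1+q*b2) ⊆ Icc A B := by
      rw [← hSA]
      intro t ht
      obtain ⟨t1, ht1, t2, ht2, rfl⟩ := combo_mem_Icc hp hq hpq h1 h2 ht
      show f (p*t1+q*t2) ≤ p*c1+q*c2
      have hf1 : f t1 ≤ c1 := by rw [← hS1] at ht1; exact ht1
      have hf2 : f t2 ≤ c2 := by rw [← hS2] at ht2; exact ht2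
      have hcv := hconv.2 (mem_univ t1) (mem_univ t2) hp hq hpq
      simp only [smul_eq_mul] at hcv
      have e1 : p * f t1 ≤ p * c1 := mul_le_mul_of_nonneg_left hf1 hp
      have e2 : q * f t2 ≤ q * c2 := mul_le_mul_of_nonneg_left hf2 hq
      linarith
    have hlohi : p*a1+q*a2 ≤ p*b1+q*b2 := by
      have := mul_le_mul_of_nonneg_left h1 hp
      have := mul_le_mul_of_nonneg_left h2 hq
      linarith
    have hAlo : A ≤ p*a1+q*a2 := (hsub ⟨le_refl _, hlohi⟩).1
    have hhiB : p*b1+q*b2 ≤ B := (hsub ⟨hlohi, le_refl _⟩).2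
    rw [hm1, hm2, hmA]
    nlinarith
  -- Main convexity argument
  constructor
  · exact convex_Ici _
  · intro X1 hX1 X2 hX2 p q hp hq hpq
    simp only [smul_eq_mul]
    have hX1' : μ * m 0 ≤ X1 := hX1
    have hX2' : μ * m 0 ≤ X2 := hX2
    have hX : μ * m 0 ≤ p * X1 + q * X2 := by
      have e0 : p*(μ*m 0) + q*(μ*m 0) = μ*m 0 := by linear_combination (μ * m 0) * hpq
      have e1 := mul_le_mul_of_nonneg_left hX1' hp
      have e2 := mul_le_mul_of_nonneg_left hX2' hq
      linarith
    obtain ⟨hc1, hmc1⟩ := hcbar X1 hX1'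
    obtain ⟨hc2, hmc2⟩ := hcbar X2 hX2'
    obtain ⟨hc, hmX⟩ := hcbar _ hX
    by_contra hlt
    push_neg at hlt
    have h1 : m (p * cbar X1 + q * cbar X2) < m (cbar (p*X1+q*X2)) :=
      hmono _ _ (by positivity) hlt
    have h2 : p * m (cbar X1) + q * m (cbar X2) ≤ m (p * cbar X1 + q * cbar X2) :=
      hconc _ _ _ _ hc1 hc2 hp hq hpq
    have h3 : μ * (p * m (cbar X1) + q * m (cbar X2)) ≤ μ * m (p * cbar X1 + q * cbar X2) :=
      mul_le_mul_of_nonneg_left h2 hμ.le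
    have h4 : μ * m (p * cbar X1 + q * cbar X2) < μ * m (cbar (p*X1+q*X2)) :=
      mul_lt_mul_of_pos_left h1 hμ
    nlinarith
end

section
/- (Weak duality for the single-bottleneck problem with heterogeneous office work ratios.) In the equally spaced piecewise linear setting, let μ > 0, let Q : [0,1] → [0, ∞) be measurable with X = ∫₀¹ h·Q(h) dh finite, and let q : {1,…,K} × [0,1] × ℝ → [0, ∞) be measurable and satisfy: (a) for almost every h ∈ [0,1], Σ_{k=1}^K ∫_ℝ q(k,h,t) dt = Q(h); (b) for almost every t ∈ ℝ, Σ_{k=1}^K ∫₀¹ h·q(k,h,t) dh ≤ μ. Then for every λ ≥ 0, the total cost satisfies Σ_{k=1}^K ∫_ℝ ∫₀¹ h·c_k(t)·q(k,h,t) dh dt ≥ λX − μ ∫_ℝ max(0, λ − ĉ_K(t)) dt. -/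
open MeasureTheory

lemma sdc_nonneg {β γ : ℝ} (hβ : 0 ≤ β) (hγ : 0 ≤ γ) (tk t : ℝ) : 0 ≤ sdc β γ tk t := by
  unfold sdc
  split
  · exact mul_nonneg hβ (by linarith)
  · exact mul_nonneg hγ (by linarith)

lemma measurable_sdc (β γ tk : ℝ) : Measurable (sdc β γ tk) := by
  unfold sdc
  exact Measurable.ite (measurableSet_lt measurable_id measurable_const) (by fun_prop) (by fun_prop)

lemma measurable_finset_inf' {s : Finset ℕ} (hs : s.Nonempty) (f : ℕ → ℝ → ℝ)
    (hf : ∀ k, Measurable (f k)) : Measurable fun t => s.inf' hs fun k => f k t := by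
  induction hs using Finset.Nonempty.cons_induction with
  | singleton a =>
    have : (fun t => ({a} : Finset ℕ).inf' (Finset.singleton_nonempty a) fun k => f k t) = f a :=
      funext fun t => Finset.inf'_singleton _
    rw [this]; exact hf a
  | cons a s ha hs ih =>
    have : (fun t => (Finset.cons a s ha).inf' (Finset.cons_nonempty ha) fun k => f k t)
        = fun t => f a t ⊓ s.inf' hs fun k => f k t :=
      funext fun t => Finset.inf'_cons hs _
    rw [this]; exact (hf a).inf ih

lemma env_eq {β γ t₁ d : ℝ} {K : ℕ} (hK : 1 ≤ K) (t : ℝ) :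
    env β γ t₁ d K t =
      (Finset.Icc 1 K).inf' ⟨1, Finset.mem_Icc.2 ⟨le_refl 1, hK⟩⟩
        fun k => sdc β γ (tpref t₁ d k) t := by
  rw [env, ← Finset.coe_Icc]
  exact (Finset.inf'_eq_csInf_image _ _ _).symm

/-- Weak duality for the single-bottleneck problem with heterogeneous office work
ratios: any feasible flow `q` (conservation (a) and capacity (b)) has total cost at
least `λX - μ ∫ max(0, λ - ĉ_K(t)) dt` for every `λ ≥ 0`. -/
theorem stmt12 (β γ : ℝ) (hβ : 0 < β) (hγ : 0 < γ)
    (K : ℕ) (hK : 1 ≤ K) (d : ℝ) (hd : 0 < d) (t₁ : ℝ)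
    (μ : ℝ) (hμ : 0 < μ)
    (Q : ℝ → ℝ) (hQmeas : Measurable Q) (hQnn : ∀ h, 0 ≤ Q h)
    (hQint : IntegrableOn (fun h : ℝ => h * Q h) (Set.Icc 0 1))
    (X : ℝ) (hX : X = ∫ h in Set.Icc (0 : ℝ) 1, h * Q h)
    (q : ℕ → ℝ → ℝ → ℝ)
    (hqmeas : ∀ k, Measurable (Function.uncurry (q k)))
    (hqnn : ∀ k h t, 0 ≤ q k h t)
    (ha : ∀ᵐ h ∂(volume.restrict (Set.Icc (0 : ℝ) 1)),
      ∑ k ∈ Finset.Icc 1 K, ∫⁻ t : ℝ, ENNReal.ofReal (q k h t) = ENNReal.ofReal (Q h))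
    (hb : ∀ᵐ t : ℝ ∂volume,
      ∑ k ∈ Finset.Icc 1 K,
        ∫⁻ h in Set.Icc (0 : ℝ) 1, ENNReal.ofReal (h * q k h t) ≤ ENNReal.ofReal μ)
    (lam : ℝ) (hlam : 0 ≤ lam) :
    ENNReal.ofReal
        (lam * X - μ * ∫ t : ℝ, max 0 (lam - env β γ t₁ d K t)) ≤
      ∑ k ∈ Finset.Icc 1 K,
        ∫⁻ t : ℝ, ∫⁻ h in Set.Icc (0 : ℝ) 1,
          ENNReal.ofReal (h * (sdc β γ (tpref t₁ d k) t * q k h t)) := by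
  classical
  have hne : (Finset.Icc 1 K).Nonempty := ⟨1, Finset.mem_Icc.2 ⟨le_refl 1, hK⟩⟩
  set E : ℝ → ℝ := env β γ t₁ d K with hEdef
  set g : ℝ → ℝ := fun t => max 0 (lam - E t) with hgdef
  have hEeq : ∀ t, E t = (Finset.Icc 1 K).inf' hne fun k => sdc β γ (tpref t₁ d k) t :=
    fun t => env_eq hK t
  have hEmeas : Measurable E := by
    have : E = fun t => (Finset.Icc 1 K).inf' hne fun k => sdc β γ (tpref t₁ d k) t :=
      funext hEeq
    rw [this]
    exact measurable_finset_inf' hne _ fun k => measurable_sdc β γ _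
  have hEnn : ∀ t, 0 ≤ E t := fun t => by
    rw [hEeq]; exact Finset.le_inf' _ _ fun k _ => sdc_nonneg hβ.le hγ.le _ _
  have hEle : ∀ k ∈ Finset.Icc 1 K, ∀ t, E t ≤ sdc β γ (tpref t₁ d k) t := fun k hk t => by
    rw [hEeq]; exact Finset.inf'_le _ hk
  have hgnn : ∀ t, 0 ≤ g t := fun t => le_max_left _ _
  have hgval : ∀ t, lam - g t = min lam (E t) := by
    intro t
    simp only [hgdef]
    rcases le_total lam (E t) with h | h
    · rw [max_eq_left (by linarith), min_eq_left h, sub_zero]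
    · rw [max_eq_right (by linarith), min_eq_right h]; ring
  have hlamgnn : ∀ t, 0 ≤ lam - g t := fun t => by
    rw [hgval t]; exact le_min hlam (hEnn t)
  have hgmeas : Measurable g := measurable_const.max (measurable_const.sub hEmeas)
  have hgle : ∀ t, g t ≤ lam := fun t => max_le hlam (by linarith [hEnn t])
  -- support of g
  set a : ℝ := t₁ - lam / β with hadef
  set b : ℝ := tpref t₁ d K + lam / γ with hbdef
  have hsupp : ∀ t, t ∉ Set.Icc a b → g t = 0 := by
    intro t ht
    have hlamE : lam ≤ E t := by
      rw [hEeq]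
      refine Finset.le_inf' _ _ fun k hk => ?_
      obtain ⟨hk1, hkK⟩ := Finset.mem_Icc.mp hk
      have hcast1 : (1 : ℝ) ≤ (k : ℝ) := by exact_mod_cast hk1
      have hcastK : (k : ℝ) ≤ (K : ℝ) := by exact_mod_cast hkK
      have htk1 : t₁ ≤ tpref t₁ d k := by
        simp only [tpref]
        nlinarith [hd.le]
      have htkK : tpref t₁ d k ≤ tpref t₁ d K := by
        simp only [tpref]
        nlinarith [hd.le]
      have hdivβ : 0 ≤ lam / β := div_nonneg hlam hβ.le
      have hdivγ : 0 ≤ lam / γ := div_nonneg hlam hγ.le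
      have hab : t < a ∨ b < t := by
        by_contra hc
        push_neg at hc
        exact ht ⟨hc.1, hc.2⟩
      rcases hab with h | h
      · have h1 : t < tpref t₁ d k := by
          simp only [hadef] at h; linarith
        simp only [sdc, if_pos h1]
        have hβlam : β * (lam / β) = lam := by field_simp
        calc lam = β * (lam / β) := hβlam.symm
          _ ≤ β * (tpref t₁ d k - t) := by
              apply mul_le_mul_of_nonneg_left _ hβ.le
              simp only [hadef] at h; linarith
      · have h1 : ¬ t < tpref t₁ d k := by
          push_neg
          simp only [hbdef] at h; linarith
        simp only [sdc, if_neg h1]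
        have hγlam : γ * (lam / γ) = lam := by field_simp
        calc lam = γ * (lam / γ) := hγlam.symm
          _ ≤ γ * (t - tpref t₁ d k) := by
              apply mul_le_mul_of_nonneg_left _ hγ.le
              simp only [hbdef] at h; linarith
    simp only [hgdef]
    rw [max_eq_left (by linarith)]
  have hgint : Integrable g := by
    have hind : Integrable (Set.indicator (Set.Icc a b) fun _ => lam) := by
      rw [integrable_indicator_iff measurableSet_Icc]
      exact integrableOn_const measure_Icc_lt_top.ne
    refine hind.mono hgmeas.aestronglyMeasurable (ae_of_all _ fun t => ?_)
    by_cases h : t ∈ Set.Icc a b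
    · rw [Set.indicator_of_mem h, Real.norm_eq_abs, Real.norm_eq_abs,
        abs_of_nonneg (hgnn t), abs_of_nonneg hlam]
      exact hgle t
    · simp [hsupp t h, Set.indicator_of_notMem h]
  have hIgnn : (0 : ℝ) ≤ ∫ t, g t := integral_nonneg hgnn
  -- the flow aggregates
  set F : ℕ → ℝ → ENNReal :=
    fun k t => ∫⁻ h in Set.Icc (0 : ℝ) 1, ENNReal.ofReal (h * q k h t) with hFdef
  set S : ℝ → ENNReal := fun t => ∑ k ∈ Finset.Icc 1 K, F k t with hSdef
  have hFmeas : ∀ k, Measurable (F k) := by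
    intro k
    exact Measurable.lintegral_prod_right'
      (f := fun p : ℝ × ℝ => ENNReal.ofReal (p.2 * q k p.2 p.1))
      ((measurable_snd.mul ((hqmeas k).comp measurable_swap)).ennreal_ofReal)
  have hGmeas : ∀ k, Measurable (fun h : ℝ => ∫⁻ t : ℝ, ENNReal.ofReal (h * q k h t)) := by
    intro k
    exact Measurable.lintegral_prod_right'
      (f := fun p : ℝ × ℝ => ENNReal.ofReal (p.1 * q k p.1 p.2))
      ((measurable_fst.mul (hqmeas k)).ennreal_ofReal)
  have hSmeas : Measurable S := Finset.measurable_sum _ fun k _ => hFmeas k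
  have hswap : ∀ k, ∫⁻ t : ℝ, F k t
      = ∫⁻ h in Set.Icc (0 : ℝ) 1, ∫⁻ t : ℝ, ENNReal.ofReal (h * q k h t) := by
    intro k
    exact lintegral_lintegral_swap
      (((measurable_snd.mul ((hqmeas k).comp measurable_swap)).ennreal_ofReal).aemeasurable)
  have hStot : ∫⁻ t : ℝ, S t = ENNReal.ofReal X := by
    rw [hSdef, lintegral_finset_sum _ fun k _ => hFmeas k,
      Finset.sum_congr rfl fun k _ => hswap k,
      ← lintegral_finset_sum _ fun k _ => hGmeas k]
    have h3 : ∀ᵐ h ∂(volume.restrict (Set.Icc (0 : ℝ) 1)),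
        (∑ k ∈ Finset.Icc 1 K, ∫⁻ t : ℝ, ENNReal.ofReal (h * q k h t))
          = ENNReal.ofReal (h * Q h) := by
      filter_upwards [ha, ae_restrict_mem measurableSet_Icc] with h hah hmem
      have hh0 : (0 : ℝ) ≤ h := hmem.1
      calc ∑ k ∈ Finset.Icc 1 K, ∫⁻ t : ℝ, ENNReal.ofReal (h * q k h t)
          = ∑ k ∈ Finset.Icc 1 K,
              ENNReal.ofReal h * ∫⁻ t : ℝ, ENNReal.ofReal (q k h t) := by
            refine Finset.sum_congr rfl fun k _ => ?_
            rw [← lintegral_const_mul' _ _ ENNReal.ofReal_ne_top]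
            exact lintegral_congr fun t => ENNReal.ofReal_mul hh0
        _ = ENNReal.ofReal h * ENNReal.ofReal (Q h) := by rw [← Finset.mul_sum, hah]
        _ = ENNReal.ofReal (h * Q h) := (ENNReal.ofReal_mul hh0).symm
    rw [lintegral_congr_ae h3, hX]
    refine (ofReal_integral_eq_lintegral_ofReal hQint ?_).symm
    filter_upwards [ae_restrict_mem measurableSet_Icc] with h hmem
    exact mul_nonneg hmem.1 (hQnn h)
  -- step A : pointwise cost bound
  have hsdcle : ∀ k ∈ Finset.Icc 1 K, ∀ t, lam - g t ≤ sdc β γ (tpref t₁ d k) t :=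
    fun k hk t => le_trans (by rw [hgval t]; exact min_le_right _ _) (hEle k hk t)
  have stepA : ∫⁻ t : ℝ, ENNReal.ofReal (lam - g t) * S t ≤
      ∑ k ∈ Finset.Icc 1 K, ∫⁻ t : ℝ, ∫⁻ h in Set.Icc (0 : ℝ) 1,
        ENNReal.ofReal (h * (sdc β γ (tpref t₁ d k) t * q k h t)) := by
    have h1 : ∀ t, ENNReal.ofReal (lam - g t) * S t
        = ∑ k ∈ Finset.Icc 1 K, ENNReal.ofReal (lam - g t) * F k t :=
      fun t => Finset.mul_sum _ _ _
    rw [lintegral_congr h1,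
      lintegral_finset_sum _ fun k _ =>
        (show Measurable (fun t => ENNReal.ofReal (lam - g t) * F k t) from
          ((measurable_const.sub hgmeas).ennreal_ofReal).mul (hFmeas k))]
    refine Finset.sum_le_sum fun k hk => lintegral_mono fun t => ?_
    rw [hFdef, ← lintegral_const_mul' _ _ ENNReal.ofReal_ne_top]
    refine lintegral_mono_ae ?_
    filter_upwards [ae_restrict_mem measurableSet_Icc] with h hmem
    have hh0 : (0 : ℝ) ≤ h := hmem.1
    rw [← ENNReal.ofReal_mul (hlamgnn t)]
    apply ENNReal.ofReal_le_ofReal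
    have hc := hsdcle k hk t
    have hq := hqnn k h t
    nlinarith [mul_le_mul_of_nonneg_right hc (mul_nonneg hh0 hq)]
  -- step C : lower bound for the minimum-cost integral
  have stepC : ENNReal.ofReal lam * ENNReal.ofReal X
        - ENNReal.ofReal (∫ t, g t) * ENNReal.ofReal μ
      ≤ ∫⁻ t : ℝ, ENNReal.ofReal (lam - g t) * S t := by
    have hgl : ∫⁻ t : ℝ, ENNReal.ofReal (g t) * ENNReal.ofReal μ
        = ENNReal.ofReal (∫ t, g t) * ENNReal.ofReal μ := by
      rw [lintegral_mul_const' _ _ ENNReal.ofReal_ne_top,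
        ← ofReal_integral_eq_lintegral_ofReal hgint (ae_of_all _ hgnn)]
    have hlamS : ∫⁻ t : ℝ, ENNReal.ofReal lam * S t
        = ENNReal.ofReal lam * ENNReal.ofReal X := by
      rw [lintegral_const_mul' _ _ ENNReal.ofReal_ne_top, hStot]
    calc ENNReal.ofReal lam * ENNReal.ofReal X
          - ENNReal.ofReal (∫ t, g t) * ENNReal.ofReal μ
        = (∫⁻ t : ℝ, ENNReal.ofReal lam * S t)
            - ∫⁻ t : ℝ, ENNReal.ofReal (g t) * ENNReal.ofReal μ := by rw [hlamS, hgl]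
      _ ≤ ∫⁻ t : ℝ, (ENNReal.ofReal lam * S t - ENNReal.ofReal (g t) * ENNReal.ofReal μ) :=
          lintegral_sub_le _ _ ((hgmeas.ennreal_ofReal).mul_const _)
      _ ≤ ∫⁻ t : ℝ, ENNReal.ofReal (lam - g t) * S t := by
          refine lintegral_mono_ae ?_
          filter_upwards [hb] with t hbt
          have hsplit : ENNReal.ofReal lam
              = ENNReal.ofReal (lam - g t) + ENNReal.ofReal (g t) := by
            rw [← ENNReal.ofReal_add (hlamgnn t) (hgnn t), sub_add_cancel]
          rw [tsub_le_iff_right, hsplit, add_mul]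
          exact add_le_add_right (mul_le_mul_right hbt _) _
  calc ENNReal.ofReal (lam * X - μ * ∫ t : ℝ, g t)
      = ENNReal.ofReal (lam * X) - ENNReal.ofReal (μ * ∫ t : ℝ, g t) :=
        ENNReal.ofReal_sub _ (mul_nonneg hμ.le hIgnn)
    _ = ENNReal.ofReal lam * ENNReal.ofReal X
        - ENNReal.ofReal (∫ t, g t) * ENNReal.ofReal μ := by
        rw [ENNReal.ofReal_mul hlam, ENNReal.ofReal_mul hμ.le,
          mul_comm (ENNReal.ofReal μ)]
    _ ≤ ∫⁻ t : ℝ, ENNReal.ofReal (lam - g t) * S t := stepC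
    _ ≤ _ := stepA
end

section
/- (Attainment of the single-bottleneck optimum; content of Lemma 2.) In the equally spaced piecewise linear setting, let μ > 0, let Q : [0,1] → [0, ∞) be measurable with X = ∫₀¹ h·Q(h) dh ∈ (0, ∞), and let λ* = c̄_K(X, μ) and Γ = Γ_K(λ*). Then there exists a measurable q : {1,…,K} × [0,1] × ℝ → [0, ∞) such that: (a) for almost every h ∈ [0,1], Σ_{k=1}^K ∫_ℝ q(k,h,t) dt = Q(h); (b) for almost every t, Σ_{k=1}^K ∫₀¹ h·q(k,h,t) dh = μ·1_Γ(t) (in particular the capacity constraint ≤ μ holds); and (c) the total cost equals the optimal value: Σ_{k=1}^K ∫_ℝ ∫₀¹ h·c_k(t)·q(k,h,t) dh dt = μ ∫_Γ ĉ_K(t) dt. -/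
open MeasureTheory

lemma sdc_eq_max {β γ : ℝ} (hβ : 0 ≤ β) (hγ : 0 ≤ γ) (tk t : ℝ) :
    sdc β γ tk t = max (β * (tk - t)) (γ * (t - tk)) := by
  unfold sdc
  split_ifs with h
  · exact (max_eq_left (by nlinarith)).symm
  · exact (max_eq_right (by nlinarith [le_of_not_gt h])).symm

lemma sdc_cont {β γ : ℝ} (hβ : 0 ≤ β) (hγ : 0 ≤ γ) (tk : ℝ) : Continuous (sdc β γ tk) := by
  have : sdc β γ tk = fun t => max (β * (tk - t)) (γ * (t - tk)) :=
    funext (sdc_eq_max hβ hγ tk)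
  rw [this]; fun_prop

lemma env_eq_inf' {β γ t₁ d : ℝ} {K : ℕ} (hK : 1 ≤ K) (t : ℝ) :
    env β γ t₁ d K t = (Finset.Icc 1 K).inf'
      ⟨1, Finset.mem_Icc.mpr ⟨le_refl 1, hK⟩⟩ (fun k => sdc β γ (tpref t₁ d k) t) := by
  rw [env, ← Finset.coe_Icc]
  exact (Finset.inf'_eq_csInf_image _ _ _).symm

lemma env_cont {β γ t₁ d : ℝ} {K : ℕ} (hβ : 0 ≤ β) (hγ : 0 ≤ γ) (hK : 1 ≤ K) :
    Continuous (env β γ t₁ d K) := by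
  have : env β γ t₁ d K = fun t => (Finset.Icc 1 K).inf'
      ⟨1, Finset.mem_Icc.mpr ⟨le_refl 1, hK⟩⟩ (fun k => sdc β γ (tpref t₁ d k) t) :=
    funext (env_eq_inf' hK)
  rw [this]
  exact Continuous.finset_inf'_apply _ (fun i _ => sdc_cont hβ hγ _)

lemma env_nonneg {β γ t₁ d : ℝ} {K : ℕ} (hβ : 0 ≤ β) (hγ : 0 ≤ γ) (hK : 1 ≤ K) (t : ℝ) :
    0 ≤ env β γ t₁ d K t := by
  rw [env_eq_inf' hK]
  exact Finset.le_inf' _ _ (fun k _ => sdc_nonneg hβ hγ _ t)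

lemma env_le {β γ t₁ d : ℝ} {K : ℕ} (hK : 1 ≤ K) {k : ℕ} (hk : k ∈ Finset.Icc 1 K) (t : ℝ) :
    env β γ t₁ d K t ≤ sdc β γ (tpref t₁ d k) t := by
  rw [env_eq_inf' hK]
  exact Finset.inf'_le _ hk

lemma env_attained {β γ t₁ d : ℝ} {K : ℕ} (hK : 1 ≤ K) (t : ℝ) :
    ∃ k ∈ Finset.Icc 1 K, sdc β γ (tpref t₁ d k) t = env β γ t₁ d K t := by
  rw [env_eq_inf' hK]
  obtain ⟨i, hi, h⟩ := Finset.exists_mem_eq_inf' (⟨1, Finset.mem_Icc.mpr ⟨le_refl 1, hK⟩⟩ :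
    (Finset.Icc 1 K).Nonempty) (fun k => sdc β γ (tpref t₁ d k) t)
  exact ⟨i, hi, h.symm⟩

/-- The cell of the partition of `Γ` where `k` is the least minimizer. -/
noncomputable def Apart (β γ t₁ d : ℝ) (K : ℕ) (lam : ℝ) (k : ℕ) : Set ℝ :=
  Gam β γ t₁ d K lam ∩ {t | sdc β γ (tpref t₁ d k) t = env β γ t₁ d K t} ∩
    ⋂ j ∈ Finset.Icc 1 (k - 1), {t | sdc β γ (tpref t₁ d j) t ≠ env β γ t₁ d K t}

lemma gam_meas {β γ t₁ d : ℝ} {K : ℕ} (hβ : 0 ≤ β) (hγ : 0 ≤ γ) (hK : 1 ≤ K) (lam : ℝ) :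
    MeasurableSet (Gam β γ t₁ d K lam) :=
  (isClosed_le (env_cont hβ hγ hK) continuous_const).measurableSet

lemma apart_meas {β γ t₁ d : ℝ} {K : ℕ} (hβ : 0 ≤ β) (hγ : 0 ≤ γ) (hK : 1 ≤ K) (lam : ℝ)
    (k : ℕ) : MeasurableSet (Apart β γ t₁ d K lam k) := by
  apply MeasurableSet.inter
  · exact (gam_meas hβ hγ hK lam).inter
      (isClosed_eq (sdc_cont hβ hγ _) (env_cont hβ hγ hK)).measurableSet
  · exact MeasurableSet.biInter (Finset.Icc 1 (k-1)).countable_toSet (fun j _ =>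
      (isClosed_eq (sdc_cont hβ hγ _) (env_cont hβ hγ hK)).measurableSet.compl)

lemma apart_subset {β γ t₁ d lam : ℝ} {K : ℕ} (k : ℕ) :
    Apart β γ t₁ d K lam k ⊆ Gam β γ t₁ d K lam :=
  fun _ ht => ht.1.1

lemma apart_eq_env {β γ t₁ d lam : ℝ} {K : ℕ} {k : ℕ} {t : ℝ}
    (ht : t ∈ Apart β γ t₁ d K lam k) : sdc β γ (tpref t₁ d k) t = env β γ t₁ d K t :=
  ht.1.2

lemma apart_disj {β γ t₁ d lam : ℝ} {K : ℕ} :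
    Set.PairwiseDisjoint ↑(Finset.Icc 1 K) (Apart β γ t₁ d K lam) := by
  have key : ∀ j ∈ Finset.Icc 1 K, ∀ k ∈ Finset.Icc 1 K, j < k →
      Disjoint (Apart β γ t₁ d K lam j) (Apart β γ t₁ d K lam k) := by
    intro j hj k hk h
    simp only [Finset.mem_Icc] at hj hk
    refine Set.disjoint_left.mpr fun t htj htk => ?_
    have h2 := htk.2
    simp only [Set.mem_iInter] at h2
    exact h2 j (Finset.mem_Icc.mpr ⟨hj.1, by omega⟩) htj.1.2
  intro j hj k hk hjk
  rcases lt_or_gt_of_ne hjk with h | h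
  · exact key j hj k hk h
  · exact (key k hk j hj h).symm

lemma apart_union {β γ t₁ d lam : ℝ} {K : ℕ} (hK : 1 ≤ K) :
    ⋃ k ∈ Finset.Icc 1 K, Apart β γ t₁ d K lam k = Gam β γ t₁ d K lam := by
  apply Set.Subset.antisymm
  · exact Set.iUnion₂_subset fun k _ => apart_subset k
  · intro t ht
    set S : Finset ℕ := (Finset.Icc 1 K).filter
      (fun k => sdc β γ (tpref t₁ d k) t = env β γ t₁ d K t) with hS
    have hSne : S.Nonempty := by
      obtain ⟨k, hk, hke⟩ := env_attained hK t
      exact ⟨k, Finset.mem_filter.mpr ⟨hk, hke⟩⟩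
    set k₀ := S.min' hSne with hk₀
    have hk₀S : k₀ ∈ S := S.min'_mem hSne
    have hk₀Icc : k₀ ∈ Finset.Icc 1 K := (Finset.mem_filter.mp hk₀S).1
    refine Set.mem_biUnion hk₀Icc ⟨⟨ht, (Finset.mem_filter.mp hk₀S).2⟩, ?_⟩
    simp only [Set.mem_iInter]
    intro j hj hje
    have hjS : j ∈ S := by
      refine Finset.mem_filter.mpr ⟨Finset.mem_Icc.mpr ⟨(Finset.mem_Icc.mp hj).1, ?_⟩, hje⟩
      have := (Finset.mem_Icc.mp hj).2
      have := (Finset.mem_Icc.mp hk₀Icc).2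
      omega
    have := S.min'_le j hjS
    have hlt : j < k₀ := by
      have := (Finset.mem_Icc.mp hj).2
      have h1 : 1 ≤ k₀ := (Finset.mem_Icc.mp hk₀Icc).1
      omega
    omega

/-- For `t ∈ Γ` there is exactly one cell containing `t`. -/
lemma apart_exists_unique {β γ t₁ d lam : ℝ} {K : ℕ} (hK : 1 ≤ K) {t : ℝ}
    (ht : t ∈ Gam β γ t₁ d K lam) :
    ∃ k ∈ Finset.Icc 1 K, t ∈ Apart β γ t₁ d K lam k ∧
      ∀ j ∈ Finset.Icc 1 K, t ∈ Apart β γ t₁ d K lam j → j = k := by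
  rw [← apart_union (β := β) (γ := γ) (t₁ := t₁) (d := d) (lam := lam) hK] at ht
  simp only [Set.mem_iUnion, exists_prop] at ht
  obtain ⟨k, hk, htk⟩ := ht
  refine ⟨k, hk, htk, fun j hj htj => ?_⟩
  by_contra hne
  exact Set.disjoint_left.mp (apart_disj hj hk hne) htj htk


/-- Attainment of the single-bottleneck optimum (Lemma 2): with `λ* = c̄_K(X, μ)` and
`Γ = Γ_K(λ*)`, there is a feasible flow `q` whose aggregated weighted arrival rate
equals `μ·1_Γ` and whose total cost equals the optimal value `μ ∫_Γ ĉ_K`. -/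
theorem stmt13 (β γ : ℝ) (hβ : 0 < β) (hγ : 0 < γ)
    (K : ℕ) (hK : 1 ≤ K) (d : ℝ) (hd : 0 < d) (t₁ : ℝ)
    (μ : ℝ) (hμ : 0 < μ)
    (Q : ℝ → ℝ) (hQmeas : Measurable Q) (hQnn : ∀ h, 0 ≤ Q h)
    (hQint : IntegrableOn (fun h : ℝ => h * Q h) (Set.Icc 0 1))
    (X : ℝ) (hX : X = ∫ h in Set.Icc (0 : ℝ) 1, h * Q h) (hXpos : 0 < X)
    (lamstar : ℝ) (hlam : IsCbar β γ t₁ d K X μ lamstar) :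
    ∃ q : ℕ → ℝ → ℝ → ℝ,
      (∀ k, Measurable (Function.uncurry (q k))) ∧
      (∀ k h t, 0 ≤ q k h t) ∧
      (∀ᵐ h ∂(volume.restrict (Set.Icc (0 : ℝ) 1)),
        ∑ k ∈ Finset.Icc 1 K, ∫⁻ t : ℝ, ENNReal.ofReal (q k h t)
          = ENNReal.ofReal (Q h)) ∧
      (∀ᵐ t : ℝ ∂volume,
        ∑ k ∈ Finset.Icc 1 K,
          ∫⁻ h in Set.Icc (0 : ℝ) 1, ENNReal.ofReal (h * q k h t)
        = (Gam β γ t₁ d K lamstar).indicator (fun _ => ENNReal.ofReal μ) t) ∧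
      (∑ k ∈ Finset.Icc 1 K,
          ∫⁻ t : ℝ, ∫⁻ h in Set.Icc (0 : ℝ) 1,
            ENNReal.ofReal (h * (sdc β γ (tpref t₁ d k) t * q k h t))
        = ENNReal.ofReal
            (μ * ∫ t in Gam β γ t₁ d K lamstar, env β γ t₁ d K t)) := by
  obtain ⟨hlam0, hvol⟩ := hlam
  set Γ : Set ℝ := Gam β γ t₁ d K lamstar with hΓdef
  set A : ℕ → Set ℝ := Apart β γ t₁ d K lamstar with hAdef
  set L : ℝ := X / μ with hLdef
  have hLpos : 0 < L := div_pos hXpos hμ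
  have hvolΓ_ne : volume Γ ≠ ⊤ := by
    intro h
    rw [h] at hvol
    simp at hvol
    linarith
  have htoReal : (volume Γ).toReal = L := by
    rw [hLdef, ← hvol]
    field_simp
  have hvolΓ : volume Γ = ENNReal.ofReal L := by
    rw [← htoReal, ENNReal.ofReal_toReal hvolΓ_ne]
  have hAmeas : ∀ k, MeasurableSet (A k) := fun k => apart_meas hβ.le hγ.le hK lamstar k
  have hXL : X * L⁻¹ = μ := by
    rw [hLdef]
    field_simp
  -- the lintegral of h * Q h over [0,1]
  have hXlint : ∫⁻ h in Set.Icc (0 : ℝ) 1, ENNReal.ofReal (h * Q h) = ENNReal.ofReal X := by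
    rw [hX]
    exact (ofReal_integral_eq_lintegral_ofReal hQint
      ((ae_restrict_mem measurableSet_Icc).mono fun h hh => mul_nonneg hh.1 (hQnn h))).symm
  refine ⟨fun k h t => (Q h / L) * Set.indicator (A k) (fun _ => (1 : ℝ)) t, ?_, ?_, ?_, ?_, ?_⟩
  · intro k
    apply Measurable.mul
    · exact (hQmeas.comp measurable_fst).div_const L
    · exact (measurable_const.indicator (hAmeas k)).comp measurable_snd
  · intro k h t
    exact mul_nonneg (div_nonneg (hQnn h) hLpos.le)
      (Set.indicator_nonneg (fun _ _ => zero_le_one) t)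
  · -- (a)
    apply ae_of_all
    intro h
    have hterm : ∀ k, (∫⁻ t : ℝ, ENNReal.ofReal
        ((Q h / L) * Set.indicator (A k) (fun _ => (1 : ℝ)) t))
        = ENNReal.ofReal (Q h / L) * volume (A k) := by
      intro k
      have hpt : ∀ t : ℝ, ENNReal.ofReal ((Q h / L) * Set.indicator (A k) (fun _ => (1 : ℝ)) t)
          = (A k).indicator (fun _ => ENNReal.ofReal (Q h / L)) t := by
        intro t
        by_cases ht : t ∈ A k
        · simp [Set.indicator_of_mem ht]
        · simp [Set.indicator_of_notMem ht]
      simp_rw [hpt]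
      rw [lintegral_indicator (hAmeas k), setLIntegral_const]
    simp_rw [hterm]
    rw [← Finset.mul_sum, ← measure_biUnion_finset apart_disj (fun k _ => hAmeas k),
      apart_union hK, ← hΓdef, hvolΓ, ← ENNReal.ofReal_mul (div_nonneg (hQnn h) hLpos.le),
      div_mul_cancel₀ _ hLpos.ne']
  · -- (b)
    apply ae_of_all
    intro t
    have hterm : ∀ k, (∫⁻ h in Set.Icc (0 : ℝ) 1, ENNReal.ofReal
        (h * ((Q h / L) * Set.indicator (A k) (fun _ => (1 : ℝ)) t)))
        = (A k).indicator (fun _ => ENNReal.ofReal μ) t := by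
      intro k
      by_cases ht : t ∈ A k
      · have heq : ∀ h : ℝ, h * (Q h / L * Set.indicator (A k) (fun _ => (1 : ℝ)) t)
            = (h * Q h) * L⁻¹ := by
          intro h
          rw [Set.indicator_of_mem ht]
          ring
        simp_rw [heq, ENNReal.ofReal_mul' (inv_nonneg.mpr hLpos.le)]
        rw [lintegral_mul_const' _ _ ENNReal.ofReal_ne_top, hXlint,
          ← ENNReal.ofReal_mul hXpos.le, hXL, Set.indicator_of_mem ht]
      · have heq : ∀ h : ℝ, h * (Q h / L * Set.indicator (A k) (fun _ => (1 : ℝ)) t) = 0 := by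
          intro h
          rw [Set.indicator_of_notMem ht]
          ring
        simp_rw [heq]
        simp [Set.indicator_of_notMem ht]
    simp_rw [hterm]
    by_cases htΓ : t ∈ Γ
    · obtain ⟨k₀, hk₀, htk₀, huniq⟩ := apart_exists_unique hK htΓ
      rw [Finset.sum_eq_single_of_mem k₀ hk₀
        (fun j hj hne => Set.indicator_of_notMem (fun htj => hne (huniq j hj htj)) _)]
      rw [Set.indicator_of_mem htk₀, Set.indicator_of_mem htΓ]
    · rw [Set.indicator_of_notMem htΓ,
        Finset.sum_eq_zero fun k _ =>
          Set.indicator_of_notMem (fun htk => htΓ (apart_subset k htk)) _]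
  · -- (c)
    have hinner : ∀ k (t : ℝ), (∫⁻ h in Set.Icc (0 : ℝ) 1, ENNReal.ofReal
        (h * (sdc β γ (tpref t₁ d k) t * ((Q h / L) * Set.indicator (A k) (fun _ => (1 : ℝ)) t))))
        = (A k).indicator (fun s => ENNReal.ofReal μ * ENNReal.ofReal (env β γ t₁ d K s)) t := by
      intro k t
      by_cases ht : t ∈ A k
      · have hc : sdc β γ (tpref t₁ d k) t = env β γ t₁ d K t := apart_eq_env ht
        have hcnn : 0 ≤ env β γ t₁ d K t := env_nonneg hβ.le hγ.le hK t
        have heq : ∀ h : ℝ, h * (sdc β γ (tpref t₁ d k) t *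
            (Q h / L * Set.indicator (A k) (fun _ => (1 : ℝ)) t))
            = (h * Q h) * (env β γ t₁ d K t * L⁻¹) := by
          intro h
          rw [Set.indicator_of_mem ht, hc]
          ring
        simp_rw [heq, ENNReal.ofReal_mul' (mul_nonneg hcnn (inv_nonneg.mpr hLpos.le))]
        rw [lintegral_mul_const' _ _ ENNReal.ofReal_ne_top, hXlint,
          ← ENNReal.ofReal_mul hXpos.le]
        have : X * (env β γ t₁ d K t * L⁻¹) = μ * env β γ t₁ d K t := by
          rw [← hXL]; ring
        rw [this, ENNReal.ofReal_mul hμ.le, Set.indicator_of_mem ht]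
      · have heq : ∀ h : ℝ, h * (sdc β γ (tpref t₁ d k) t *
            (Q h / L * Set.indicator (A k) (fun _ => (1 : ℝ)) t)) = 0 := by
          intro h
          rw [Set.indicator_of_notMem ht]
          ring
        simp_rw [heq]
        simp [Set.indicator_of_notMem ht]
    simp_rw [hinner]
    have henvmeas : Measurable fun t => ENNReal.ofReal (env β γ t₁ d K t) :=
      ENNReal.measurable_ofReal.comp (env_cont hβ.le hγ.le hK).measurable
    have hstep : ∀ k, (∫⁻ t : ℝ, (A k).indicator
        (fun s => ENNReal.ofReal μ * ENNReal.ofReal (env β γ t₁ d K s)) t)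
        = ENNReal.ofReal μ * ∫⁻ t in A k, ENNReal.ofReal (env β γ t₁ d K t) := by
      intro k
      rw [lintegral_indicator (hAmeas k), lintegral_const_mul' _ _ ENNReal.ofReal_ne_top]
    simp_rw [hstep]
    rw [← Finset.mul_sum,
      ← lintegral_biUnion_finset apart_disj (fun k _ => hAmeas k), apart_union hK, ← hΓdef]
    have henvint : IntegrableOn (env β γ t₁ d K) Γ := by
      apply Measure.integrableOn_of_bounded (M := lamstar) hvolΓ_ne
        (env_cont hβ.le hγ.le hK).aestronglyMeasurable
      refine (ae_restrict_mem (gam_meas hβ.le hγ.le hK lamstar)).mono fun t ht => ?_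
      rw [Real.norm_eq_abs, abs_of_nonneg (env_nonneg hβ.le hγ.le hK t)]
      exact ht
    have : (∫⁻ t in Γ, ENNReal.ofReal (env β γ t₁ d K t))
        = ENNReal.ofReal (∫ t in Γ, env β γ t₁ d K t) :=
      (ofReal_integral_eq_lintegral_ofReal henvint
        (ae_of_all _ fun t => env_nonneg hβ.le hγ.le hK t)).symm
    rw [this, ← ENNReal.ofReal_mul hμ.le]
end

section
/- (Example of the paradox, Appendix C.) In the equally spaced piecewise linear setting with β = 0.3, γ = 0.6 (so δ = 0.2) and spacing d = 20, the total commuting cost under the combined scheme exceeds that under telecommuting alone: c̄₂(750, 30)·750 + c̄₂(1500, 30)·1500 + c̄₂(525, 10)·525 > c̄₁(750, 30)·750 + c̄₁(1125, 30)·1125, where c̄₁ is computed with the single preferred time t₁ and c̄₂ with the two preferred times t₁ and t₂ = t₁ + 20. In particular, introducing staggered work hours in addition to telecommuting can strictly increase the total commuting cost. -/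
open MeasureTheory

lemma sdc_le (tk t c : ℝ) (hc : 0 ≤ c) :
    sdc 0.3 0.6 tk t ≤ c ↔ tk - (10/3)*c ≤ t ∧ t ≤ tk + (5/3)*c := by
  unfold sdc
  split_ifs with h
  · constructor
    · intro hle; constructor <;> nlinarith
    · rintro ⟨h1, h2⟩; nlinarith
  · push_neg at h
    constructor
    · intro hle; constructor <;> nlinarith
    · rintro ⟨h1, h2⟩; nlinarith

lemma gam_one (t₁ c : ℝ) (hc : 0 ≤ c) :
    Gam 0.3 0.6 t₁ 20 1 c = Set.Icc (t₁ - (10/3)*c) (t₁ + (5/3)*c) := by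
  have hI : Set.Icc (1:ℕ) 1 = {1} := Set.Icc_self 1
  ext t
  have henv : env 0.3 0.6 t₁ 20 1 t = sdc 0.3 0.6 t₁ t := by
    unfold env
    rw [hI, Set.image_singleton, csInf_singleton]
    norm_num [tpref]
  simp only [Gam, Set.mem_setOf_eq, henv, sdc_le t₁ t c hc, Set.mem_Icc]

lemma vol_one (t₁ c : ℝ) (hc : 0 ≤ c) :
    (volume (Gam 0.3 0.6 t₁ 20 1 c)).toReal = 5 * c := by
  rw [gam_one t₁ c hc, Real.volume_Icc, ENNReal.toReal_ofReal (by linarith)]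
  ring

lemma gam_two (t₁ c : ℝ) (hc : 0 ≤ c) :
    Gam 0.3 0.6 t₁ 20 2 c =
      Set.Icc (t₁ - (10/3)*c) (t₁ + (5/3)*c) ∪
      Set.Icc (t₁ + 20 - (10/3)*c) (t₁ + 20 + (5/3)*c) := by
  have hI : Set.Icc (1:ℕ) 2 = {1, 2} := by ext x; simp [Set.mem_Icc]; omega
  ext t
  have henv : env 0.3 0.6 t₁ 20 2 t
      = min (sdc 0.3 0.6 t₁ t) (sdc 0.3 0.6 (t₁ + 20) t) := by
    unfold env
    rw [hI, Set.image_pair]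
    have h1 : tpref t₁ 20 1 = t₁ := by norm_num [tpref]
    have h2 : tpref t₁ 20 2 = t₁ + 20 := by norm_num [tpref]
    rw [h1, h2, csInf_pair]
  simp only [Gam, Set.mem_setOf_eq, henv, min_le_iff, Set.mem_union, Set.mem_Icc,
    sdc_le _ t c hc]

lemma vol_two (t₁ c : ℝ) (hc : 0 ≤ c) :
    (volume (Gam 0.3 0.6 t₁ 20 2 c)).toReal = if c < 4 then 10 * c else 20 + 5 * c := by
  rw [gam_two t₁ c hc]
  split_ifs with h4
  · rw [measure_union _ measurableSet_Icc]
    · rw [Real.volume_Icc, Real.volume_Icc, ENNReal.toReal_add (by simp) (by simp),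
        ENNReal.toReal_ofReal (by linarith), ENNReal.toReal_ofReal (by linarith)]
      ring
    · apply Set.disjoint_left.2
      rintro x ⟨-, hx2⟩ ⟨hx3, -⟩
      linarith
  · push_neg at h4
    rw [Set.Icc_union_Icc' (by linarith) (by linarith),
      min_eq_left (by linarith), max_eq_right (by linarith),
      Real.volume_Icc, ENNReal.toReal_ofReal (by linarith)]
    ring

/-- Example of the paradox (Appendix C): with `β = 0.3`, `γ = 0.6`, spacing `d = 20`,
the total commuting cost under the combined scheme (telecommuting + staggered work
hours; demands 750, 1500, 525 at capacities 30, 30, 10, two preferred times) exceeds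
that under telecommuting alone (demands 750, 1125 at capacity 30, one preferred time). -/
theorem stmt18 (t₁ : ℝ) (a₁ a₂ a₃ b₁ b₂ : ℝ)
    (ha₁ : IsCbar 0.3 0.6 t₁ 20 2 750 30 a₁)
    (ha₂ : IsCbar 0.3 0.6 t₁ 20 2 1500 30 a₂)
    (ha₃ : IsCbar 0.3 0.6 t₁ 20 2 525 10 a₃)
    (hb₁ : IsCbar 0.3 0.6 t₁ 20 1 750 30 b₁)
    (hb₂ : IsCbar 0.3 0.6 t₁ 20 1 1125 30 b₂) :
    b₁ * 750 + b₂ * 1125 < a₁ * 750 + a₂ * 1500 + a₃ * 525 := by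
  obtain ⟨ha₁0, ha₁e⟩ := ha₁
  obtain ⟨ha₂0, ha₂e⟩ := ha₂
  obtain ⟨ha₃0, ha₃e⟩ := ha₃
  obtain ⟨hb₁0, hb₁e⟩ := hb₁
  obtain ⟨hb₂0, hb₂e⟩ := hb₂
  rw [vol_one t₁ b₁ hb₁0] at hb₁e
  rw [vol_one t₁ b₂ hb₂0] at hb₂e
  rw [vol_two t₁ a₁ ha₁0] at ha₁e
  rw [vol_two t₁ a₂ ha₂0] at ha₂e
  rw [vol_two t₁ a₃ ha₃0] at ha₃e
  have hb₁' : b₁ = 5 := by linarith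
  have hb₂' : b₂ = 7.5 := by linarith
  have ha₁' : a₁ = 2.5 := by
    split_ifs at ha₁e with h <;> linarith
  have ha₂' : a₂ = 6 := by
    split_ifs at ha₂e with h <;> linarith
  have ha₃' : a₃ = 6.5 := by
    split_ifs at ha₃e with h <;> linarith
  rw [hb₁', hb₂', ha₁', ha₂', ha₃']
  norm_num
end
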